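/- Let g ∈ ℂ[x,y] be a reduced polynomial whose partial derivatives g_x, g_y form a regular sequence. Then the sequence 0 → R → AR(g) → A(g) → 0 is exact, where the first map sends h to (h·g_y, −h·g_x, 0) and the second map is projection onto the third coordinate. -/

import Mathlib

/-!
Everything except exactness in the middle is formal: `AR(g)` maps into `J_g : (g)` and onto it
by the definition of membership in `J_g = (g_x, g_y)`, and `h ↦ (h g_y, -h g_x, 0)` is injective
because `g_x` is a non-zero-divisor. Exactness in the middle is exactness of the Koszul complex
of the regular sequence `(g_x, g_y)`: from `α g_x + β g_y = 0` regularity gives `β = -k g_x`,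
and cancelling `g_x` then gives `α = k g_y`.
-/

open MvPolynomial

section Koszul

variable {R : Type*} [CommRing R] {a b : R}

theorem mem_span_pair_iff_exists_mul_add_mul_add_eq_zero {x : R} :
    x ∈ Ideal.span {a, b} ↔ ∃ α β : R, α * a + β * b + x = 0 := by
  rw [Ideal.mem_span_pair]
  constructor
  · rintro ⟨α, β, h⟩
    exact ⟨-α, -β, by linear_combination -h⟩
  · rintro ⟨α, β, h⟩
    exact ⟨-α, -β, by linear_combination -h⟩

theorem exists_koszul_of_mul_add_mul_eq_zero (ha : a ∈ nonZeroDivisors R)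
    (hb : ∀ h : R, b * h ∈ Ideal.span {a} → h ∈ Ideal.span {a})
    {α β : R} (hαβ : α * a + β * b = 0) : ∃ k : R, α = k * b ∧ β = -(k * a) := by
  have hβ : β ∈ Ideal.span {a} :=
    hb β (Ideal.mem_span_singleton'.mpr ⟨-α, by linear_combination -hαβ⟩)
  obtain ⟨c, hc⟩ := Ideal.mem_span_singleton'.mp hβ
  refine ⟨-c, ?_, by rw [← hc]; ring⟩
  exact (mul_cancel_right_mem_nonZeroDivisors ha).mp (by linear_combination hαβ + b * hc)

end Koszul

theorem affine_syzygy_exact_sequence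
    (g : MvPolynomial (Fin 2) ℂ)
    (hreg : (pderiv (0 : Fin 2) g ∈ nonZeroDivisors (MvPolynomial (Fin 2) ℂ)) ∧
      (∀ h : MvPolynomial (Fin 2) ℂ,
        pderiv (1 : Fin 2) g * h ∈ Ideal.span {pderiv (0 : Fin 2) g} →
          h ∈ Ideal.span {pderiv (0 : Fin 2) g})) :
    -- the first map lands in AR(g)
    (∀ h : MvPolynomial (Fin 2) ℂ,
      (h * pderiv (1 : Fin 2) g) * pderiv (0 : Fin 2) g +
        (-(h * pderiv (0 : Fin 2) g)) * pderiv (1 : Fin 2) g + 0 * g = 0) ∧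
    -- exactness on the left: the first map is injective
    Function.Injective (fun h : MvPolynomial (Fin 2) ℂ =>
      (h * pderiv (1 : Fin 2) g, -(h * pderiv (0 : Fin 2) g), (0 : MvPolynomial (Fin 2) ℂ))) ∧
    -- the projection maps AR(g) into A(g) = J_g : (g)
    (∀ ρ : MvPolynomial (Fin 2) ℂ × MvPolynomial (Fin 2) ℂ × MvPolynomial (Fin 2) ℂ,
      ρ.1 * pderiv (0 : Fin 2) g + ρ.2.1 * pderiv (1 : Fin 2) g + ρ.2.2 * g = 0 →
      ρ.2.2 * g ∈ Ideal.span {pderiv (0 : Fin 2) g, pderiv (1 : Fin 2) g}) ∧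
    -- exactness in the middle: kernel of the projection = image of the first map
    (∀ ρ : MvPolynomial (Fin 2) ℂ × MvPolynomial (Fin 2) ℂ × MvPolynomial (Fin 2) ℂ,
      ρ.1 * pderiv (0 : Fin 2) g + ρ.2.1 * pderiv (1 : Fin 2) g + ρ.2.2 * g = 0 →
      (ρ.2.2 = 0 ↔ ∃ h : MvPolynomial (Fin 2) ℂ,
        ρ = (h * pderiv (1 : Fin 2) g, -(h * pderiv (0 : Fin 2) g), 0))) ∧
    -- exactness on the right: the projection is surjective onto A(g)
    (∀ γ : MvPolynomial (Fin 2) ℂ,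
      γ * g ∈ Ideal.span {pderiv (0 : Fin 2) g, pderiv (1 : Fin 2) g} →
      ∃ α β : MvPolynomial (Fin 2) ℂ,
        α * pderiv (0 : Fin 2) g + β * pderiv (1 : Fin 2) g + γ * g = 0) := by
  obtain ⟨hx, hy⟩ := hreg
  refine ⟨fun h => by ring, ?injective, fun ρ hρ =>
    mem_span_pair_iff_exists_mul_add_mul_add_eq_zero.mpr ⟨ρ.1, ρ.2.1, hρ⟩, ?middle,
    fun γ hγ => mem_span_pair_iff_exists_mul_add_mul_add_eq_zero.mp hγ⟩
  case injective =>
    intro h₁ h₂ heq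
    exact (mul_cancel_right_mem_nonZeroDivisors hx).mp (neg_injective (congrArg (·.2.1) heq))
  case middle =>
    rintro ⟨α, β, γ⟩ hρ
    refine ⟨fun hγ => ?_, fun ⟨h, hρh⟩ => congrArg (·.2.2) hρh⟩
    subst hγ
    obtain ⟨k, rfl, rfl⟩ :=
      exists_koszul_of_mul_add_mul_eq_zero hx hy (by simpa using hρ)
    exact ⟨k, rfl⟩
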